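/- Let K be a field, n ≥ 1, and let A ∈ K^{n×n} have characteristic polynomial χ_A(z) = z^n − Σ_{i=0}^{n-1} p_i z^i, where p = (p_0, …, p_{n-1}) ∈ K^n. Then the following are equivalent: (i) the crossover identity Σ_{k=0}^{n-1} g_k A^k (b + b_n p) + g_n A^n (b + b_n p) = Σ_{k=0}^{n-1} b_k A^k (g + g_n p) + b_n A^n (g + g_n p) holds for all b, g ∈ K^n and all scalars b_n, g_n ∈ K; (ii) A = F_p. -/

import Mathlib

open Matrix

/-- The second companion matrix `F_p` of `p ∈ K^{n+1}`: columns `0,…,n-1` are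
`e_1,…,e_n` and the last column is `p`. -/
def companion {K : Type*} [Field K] {n : ℕ} (p : Fin (n + 1) → K) :
    Matrix (Fin (n + 1)) (Fin (n + 1)) K :=
  Matrix.of fun i j => if j = Fin.last n then p i else if (i : ℕ) = (j : ℕ) + 1 then 1 else 0

/-- The reachability (Krylov) matrix `R(A, g) = [g, Ag, …, A^{n-1} g]`. -/
def krylov {K : Type*} [Field K] {n : ℕ} (A : Matrix (Fin n) (Fin n) K) (g : Fin n → K) :
    Matrix (Fin n) (Fin n) K :=
  Matrix.of fun i j => (A ^ (j : ℕ)).mulVec g i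

/-- `b(A) = Σ_{i=0}^{n-1} b_i A^i`. -/
def polyEval {K : Type*} [Field K] {n : ℕ} (b : Fin n → K) (A : Matrix (Fin n) (Fin n) K) :
    Matrix (Fin n) (Fin n) K :=
  ∑ i : Fin n, b i • A ^ (i : ℕ)

/-!
By Cayley–Hamilton, `A ^ (n + 1) = p(A)`, so both sides of the crossover identity have the form
`x(A) y` with `x = g + g_n p`, `y = b + b_n p`, and the identity says `x(A) y = y(A) x` for all
`x, y`. Taking `y = e₀` gives `A ^ i e₀ = eᵢ`, which forces the columns of `A` to be those of
`F_p`. Conversely every `y` equals `y(F_p) e₀`, and polynomials in `F_p` commute.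
-/

section

variable {K : Type*} [Field K] {n : ℕ}

lemma polyEval_mulVec (b : Fin n → K) (A : Matrix (Fin n) (Fin n) K) (v : Fin n → K) :
    polyEval b A *ᵥ v = ∑ i : Fin n, b i • A ^ (i : ℕ) *ᵥ v := by
  simp only [polyEval, sum_mulVec, smul_mulVec]

lemma polyEval_single_one (A : Matrix (Fin n) (Fin n) K) (i : Fin n) :
    polyEval (Pi.single i 1) A = A ^ (i : ℕ) := by
  simp [polyEval, Pi.single_apply]

lemma commute_polyEval (b c : Fin n → K) (A : Matrix (Fin n) (Fin n) K) :
    Commute (polyEval b A) (polyEval c A) :=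
  .sum_left _ _ _ fun i _ => .sum_right _ _ _ fun j _ =>
    ((Commute.pow_pow_self A i j).smul_left _).smul_right _

lemma pow_eq_polyEval_of_charpoly {A : Matrix (Fin (n + 1)) (Fin (n + 1)) K} {p : Fin (n + 1) → K}
    (hchar : A.charpoly =
      Polynomial.X ^ (n + 1) - ∑ i : Fin (n + 1), Polynomial.C (p i) * Polynomial.X ^ (i : ℕ)) :
    A ^ (n + 1) = polyEval p A := by
  simpa [hchar, sub_eq_zero, polyEval, Algebra.smul_def] using aeval_self_charpoly A

lemma sum_smul_pow_mulVec_add_smul_pow_mulVec {A : Matrix (Fin (n + 1)) (Fin (n + 1)) K}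
    {p : Fin (n + 1) → K} (hA : A ^ (n + 1) = polyEval p A) (u : Fin (n + 1) → K) (c : K)
    (v : Fin (n + 1) → K) :
    (∑ k : Fin (n + 1), u k • A ^ (k : ℕ) *ᵥ v) + c • A ^ (n + 1) *ᵥ v =
      polyEval (u + c • p) A *ᵥ v := by
  simp only [hA, polyEval_mulVec, Finset.smul_sum, ← Finset.sum_add_distrib, Pi.add_apply,
    Pi.smul_apply, smul_eq_mul, add_smul, mul_smul]

section companion

variable (p : Fin (n + 1) → K)

lemma companion_mulVec_single_castSucc (i : Fin n) :
    companion p *ᵥ Pi.single i.castSucc 1 = Pi.single i.succ 1 := by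
  ext r
  simp [companion, Pi.single_apply, Fin.ext_iff, i.isLt.ne]

lemma companion_mulVec_single_last : companion p *ᵥ Pi.single (Fin.last n) 1 = p := by
  ext r
  simp [companion]

lemma companion_pow_mulVec_single_zero (i : Fin (n + 1)) :
    companion p ^ (i : ℕ) *ᵥ Pi.single 0 1 = Pi.single i 1 := by
  induction i using Fin.induction with
  | zero => rw [Fin.val_zero, pow_zero, one_mulVec]
  | succ i ih =>
    rw [Fin.val_succ, pow_succ', ← mulVec_mulVec, ← Fin.val_castSucc, ih,
      companion_mulVec_single_castSucc]

lemma polyEval_companion_mulVec_single_zero (x : Fin (n + 1) → K) :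
    polyEval x (companion p) *ᵥ Pi.single 0 1 = x := by
  simp only [polyEval_mulVec, companion_pow_mulVec_single_zero]
  exact (pi_eq_sum_univ' x).symm

lemma polyEval_companion_mulVec_comm (x y : Fin (n + 1) → K) :
    polyEval x (companion p) *ᵥ y = polyEval y (companion p) *ᵥ x := by
  conv_lhs => rw [← polyEval_companion_mulVec_single_zero p y]
  rw [mulVec_mulVec, (commute_polyEval x y _).eq, ← mulVec_mulVec,
    polyEval_companion_mulVec_single_zero]

end companion

lemma eq_companion_of_pow_mulVec_single_zero {A : Matrix (Fin (n + 1)) (Fin (n + 1)) K}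
    {p : Fin (n + 1) → K} (hA : A ^ (n + 1) = polyEval p A)
    (h : ∀ i : Fin (n + 1), A ^ (i : ℕ) *ᵥ Pi.single 0 1 = Pi.single i 1) :
    A = companion p := by
  refine ext_of_mulVec_single fun j => ?_
  induction j using Fin.lastCases with
  | last =>
    rw [companion_mulVec_single_last, ← h, mulVec_mulVec, ← pow_succ', Fin.val_last, hA,
      polyEval_mulVec]
    simp only [h]
    exact (pi_eq_sum_univ' p).symm
  | cast j =>
    rw [companion_mulVec_single_castSucc, ← h, mulVec_mulVec, ← pow_succ', ← h j.succ,
      Fin.val_castSucc, Fin.val_succ]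

end

/-- Theorem 4: let `A` have characteristic polynomial `z^n - Σ_{i<n} p_i z^i`.
Then the crossover identity
`Σ_{k=0}^n A^k g_k (b + b_n p) = Σ_{k=0}^n A^k b_k (g + g_n p)`
holds for all `b, g, b_n, g_n` if and only if `A = F_p`. -/
theorem crossover_iff_companion {K : Type*} [Field K] {n : ℕ}
    (A : Matrix (Fin (n + 1)) (Fin (n + 1)) K) (p : Fin (n + 1) → K)
    (hchar : A.charpoly =
      Polynomial.X ^ (n + 1) - ∑ i : Fin (n + 1), Polynomial.C (p i) * Polynomial.X ^ (i : ℕ)) :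
    ((∀ b g : Fin (n + 1) → K, ∀ bn gn : K,
        (∑ k : Fin (n + 1), g k • (A ^ (k : ℕ)).mulVec (b + bn • p)) +
            gn • (A ^ (n + 1)).mulVec (b + bn • p) =
          (∑ k : Fin (n + 1), b k • (A ^ (k : ℕ)).mulVec (g + gn • p)) +
            bn • (A ^ (n + 1)).mulVec (g + gn • p)) ↔
      A = companion p) := by
  have hA := pow_eq_polyEval_of_charpoly hchar
  simp only [sum_smul_pow_mulVec_add_smul_pow_mulVec hA]
  constructor
  · intro h
    refine eq_companion_of_pow_mulVec_single_zero hA fun i => ?_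
    simpa only [zero_smul, add_zero, polyEval_single_one, Fin.val_zero, pow_zero, one_mulVec]
      using h (Pi.single 0 1) (Pi.single i 1) 0 0
  · rintro rfl b g bn gn
    exact polyEval_companion_mulVec_comm p _ _
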